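/- arXiv:2406.19499 — 4 statements merged into one kernel-verified Lean document; each statement's English description precedes it below -/
import Mathlib

section
/- There exists a constant c_0 > 0, depending only on N, the potentials V_1, …, V_{N−1} and the constants a_1, …, a_{2N−2} ≥ 1, such that whenever a_0 ≥ c_0, for every (p,q) ∈ ℝ^N × ℝ^N one has (a_0/2) H(p,q)^{2N−1} ≤ W(p,q) ≤ 2 a_0 H(p,q)^{2N−1}. -/
open Real Finset

noncomputable section

/-- Lie derivative of `g` along the vector field `F`. -/
def LieD {E : Type*} [NormedAddCommGroup E] [NormedSpace ℝ E]
    (F : E → E) (g : E → ℝ) (x : E) : ℝ :=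
  fderiv ℝ g x (F x)

/-- Phase space of a chain of `N` rotators: `(p, q)`. -/
abbrev RotState (N : ℕ) : Type := (Fin N → ℝ) × (Fin N → ℝ)

/-- Momentum with 0-based natural index, `0` out of range. -/
def pc {N : ℕ} (x : RotState N) (i : ℕ) : ℝ := if h : i < N then x.1 ⟨i, h⟩ else 0

/-- Position with 0-based natural index, `0` out of range. -/
def qc {N : ℕ} (x : RotState N) (i : ℕ) : ℝ := if h : i < N then x.2 ⟨i, h⟩ else 0

/-- `ξ_i = −V_i'(q_i − q_{i+1})` (0-based index `i`). -/
def xi (N : ℕ) (V : ℕ → ℝ → ℝ) (i : ℕ) (x : RotState N) : ℝ :=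
  -(deriv (V i) (qc x i - qc x (i + 1)))

/-- The explicit formula `L_F ξ_i = −(p_i − p_{i+1}) V_i''(q_i − q_{i+1})`. -/
def LFxi (N : ℕ) (V : ℕ → ℝ → ℝ) (i : ℕ) (x : RotState N) : ℝ :=
  -((pc x i - pc x (i + 1)) * deriv (deriv (V i)) (qc x i - qc x (i + 1)))

/-- Hamiltonian of the rotator chain. -/
def Ham (N : ℕ) (V : ℕ → ℝ → ℝ) (x : RotState N) : ℝ :=
  ∑ i : Fin N, (x.1 i) ^ 2 / 2 + ∑ i ∈ Finset.range (N - 1), V i (qc x i - qc x (i + 1))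

/-- Vector field of the damped rotator chain. -/
def Frot (N : ℕ) (V : ℕ → ℝ → ℝ) (x : RotState N) : RotState N :=
  (fun i => xi N V i x - (if (i : ℕ) = 0 then x.1 i else xi N V ((i : ℕ) - 1) x),
   fun i => x.1 i)

/-- The Lyapunov function `W`. -/
def Wrot (N : ℕ) (V : ℕ → ℝ → ℝ) (a : ℕ → ℝ) (x : RotState N) : ℝ :=
  a 0 * Ham N V x ^ (2 * N - 1) -
    ∑ i ∈ Finset.range (N - 1),
      (a (2 * i + 1) * Ham N V x ^ (2 * (N - 1) - (2 * i + 1)) * (pc x i * xi N V i x)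
        + a (2 * i + 2) * Ham N V x ^ (2 * (N - 1) - (2 * i + 2)) * (xi N V i x * LFxi N V i x))

/-- Standing assumptions on the interaction potentials. -/
structure RotAssumptions (N : ℕ) (V : ℕ → ℝ → ℝ) : Prop where
  smooth : ∀ i < N - 1, ContDiff ℝ 3 (V i)
  periodic : ∀ i < N - 1, Function.Periodic (V i) 1
  ge_one : ∀ i < N - 1, ∀ x : ℝ, 1 ≤ V i x
  nondeg : ∀ i < N - 1, ∀ x : ℝ, (deriv (V i) x) ^ 2 + (deriv (deriv (V i)) x) ^ 2 ≠ 0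
  top : ∀ i, N - 1 ≤ i → V i = fun _ => 0

/-!
Every correction term of `W` is a power `H ^ α` with `α ≤ 2N - 2`, times a product of `p_j`'s, of
`V_j'` and of `V_j''` in which the momenta occur at most once. The derivatives of the potentials are
bounded, being continuous and periodic, while `|p_j| ≤ 2H` because `H ≥ 1`. Hence the correction
is at most `C H ^ (2N - 1)` in absolute value, and `a₀ ≥ 2C` gives both inequalities.
-/

theorem Function.Periodic.deriv {f : ℝ → ℝ} {c : ℝ} (hf : Function.Periodic f c) :
    Function.Periodic (_root_.deriv f) c := fun x => by
  rw [← deriv_comp_add_const, funext hf]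

theorem Function.Periodic.exists_abs_le_of_continuous {f : ℝ → ℝ} {c : ℝ}
    (hp : Function.Periodic f c) (hc : c ≠ 0) (hf : Continuous f) : ∃ B, ∀ x, |f x| ≤ B := by
  obtain ⟨B, hB⟩ := isBounded_iff_forall_norm_le.mp (hp.isBounded_of_continuous hc hf)
  exact ⟨B, fun x => hB (f x) (Set.mem_range_self x)⟩

theorem exists_abs_deriv_le_of_periodic {f : ℝ → ℝ} {c : ℝ} (hp : Function.Periodic f c)
    (hc : c ≠ 0) (hf : ContDiff ℝ 2 f) :
    ∃ B, ∀ x, |deriv f x| ≤ B ∧ |deriv (deriv f) x| ≤ B := by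
  obtain ⟨B₁, hB₁⟩ := hp.deriv.exists_abs_le_of_continuous hc (hf.continuous_deriv one_le_two)
  obtain ⟨B₂, hB₂⟩ := hp.deriv.deriv.exists_abs_le_of_continuous hc
    ((hf.deriv' (n := 1)).continuous_deriv le_rfl)
  exact ⟨max B₁ B₂, fun x => ⟨(hB₁ x).trans (le_max_left _ _), (hB₂ x).trans (le_max_right _ _)⟩⟩

theorem abs_mul_pow_mul_le {c t y K : ℝ} {m n : ℕ} (ht : 1 ≤ t) (hmn : m < n) (hy : |y| ≤ K * t) :
    |c * t ^ m * y| ≤ |c| * K * t ^ n := by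
  have ht₀ : 0 ≤ t := zero_le_one.trans ht
  calc |c * t ^ m * y| = |c| * t ^ m * |y| := by
        rw [abs_mul, abs_mul, abs_of_nonneg (pow_nonneg ht₀ m)]
    _ ≤ |c| * t ^ m * (K * t) := by gcongr
    _ = |c| * K * t ^ (m + 1) := by ring
    _ ≤ |c| * K * t ^ n := by
        have hK : 0 ≤ K := nonneg_of_mul_nonneg_left ((abs_nonneg y).trans hy) (by linarith)
        exact mul_le_mul_of_nonneg_left (pow_le_pow_right₀ ht hmn) (by positivity)

theorem half_mul_le_sub_and_sub_le_two_mul {a C T S : ℝ} (hT : 0 ≤ T) (hS : |S| ≤ C * T)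
    (ha : 2 * C ≤ a) : a / 2 * T ≤ a * T - S ∧ a * T - S ≤ 2 * a * T := by
  obtain ⟨hSl, hSr⟩ := abs_le.mp hS
  have hCT : 0 ≤ C * T := (abs_nonneg S).trans hS
  constructor <;> nlinarith [mul_le_mul_of_nonneg_right ha hT]

variable {N : ℕ} {V : ℕ → ℝ → ℝ}

def Wcorr (N : ℕ) (V : ℕ → ℝ → ℝ) (a : ℕ → ℝ) (i : ℕ) (x : RotState N) : ℝ :=
  a (2 * i + 1) * Ham N V x ^ (2 * (N - 1) - (2 * i + 1)) * (pc x i * xi N V i x)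
    + a (2 * i + 2) * Ham N V x ^ (2 * (N - 1) - (2 * i + 2)) * (xi N V i x * LFxi N V i x)

theorem Wrot_eq (a : ℕ → ℝ) (x : RotState N) :
    Wrot N V a x = a 0 * Ham N V x ^ (2 * N - 1) - ∑ i ∈ range (N - 1), Wcorr N V a i x :=
  rfl

theorem Wcorr_update_zero (a : ℕ → ℝ) (a₀ : ℝ) (i : ℕ) :
    Wcorr N V (Function.update a 0 a₀) i = Wcorr N V a i := by
  ext x
  rw [Wcorr, Wcorr, Function.update_of_ne (by omega), Function.update_of_ne (by omega)]

namespace RotAssumptions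

variable (hV : RotAssumptions N V) (x : RotState N)
include hV

theorem exists_deriv_bound :
    ∃ B : ℕ → ℝ, ∀ i < N - 1, ∀ y, |deriv (V i) y| ≤ B i ∧ |deriv (deriv (V i)) y| ≤ B i := by
  have h : ∀ i, ∃ B, i < N - 1 → ∀ y, |deriv (V i) y| ≤ B ∧ |deriv (deriv (V i)) y| ≤ B := by
    intro i
    by_cases hi : i < N - 1
    · obtain ⟨B, hB⟩ := exists_abs_deriv_le_of_periodic (hV.periodic i hi) one_ne_zero
        ((hV.smooth i hi).of_le (by norm_num))
      exact ⟨B, fun _ => hB⟩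
    · exact ⟨0, fun h => absurd h hi⟩
  choose B hB using h
  exact ⟨B, hB⟩

theorem sum_potential_ge :
    ((N - 1 : ℕ) : ℝ) ≤ ∑ i ∈ range (N - 1), V i (qc x i - qc x (i + 1)) := by
  simpa using card_nsmul_le_sum (range (N - 1)) _ 1
    fun i hi => hV.ge_one i (mem_range.mp hi) _

theorem sq_pc_le (j : ℕ) : pc x j ^ 2 ≤ 2 * Ham N V x := by
  have hkin : ∀ i : Fin N, 0 ≤ x.1 i ^ 2 / 2 := fun i => by positivity
  have hpot := hV.sum_potential_ge x
  have hN : (0 : ℝ) ≤ ((N - 1 : ℕ) : ℝ) := Nat.cast_nonneg _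
  unfold pc Ham
  split_ifs with hj
  · linarith [single_le_sum (fun i _ => hkin i) (mem_univ (⟨j, hj⟩ : Fin N))]
  · linarith [sum_nonneg fun i (_ : i ∈ univ) => hkin i]

theorem Ham_nonneg : 0 ≤ Ham N V x := by
  nlinarith [hV.sq_pc_le x 0]

theorem one_le_Ham (hN : 1 < N) : 1 ≤ Ham N V x := by
  have hpot := hV.sum_potential_ge x
  have hN' : (1 : ℝ) ≤ ((N - 1 : ℕ) : ℝ) := by exact_mod_cast (by omega : 1 ≤ N - 1)
  have hkin : 0 ≤ ∑ i : Fin N, x.1 i ^ 2 / 2 := sum_nonneg fun i _ => by positivity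
  rw [Ham]
  linarith

theorem abs_pc_le (hN : 1 < N) (j : ℕ) : |pc x j| ≤ 2 * Ham N V x := by
  have hH := hV.one_le_Ham x hN
  apply abs_le_of_sq_le_sq _ (by linarith)
  nlinarith [hV.sq_pc_le x j]

theorem abs_Wcorr_le {B : ℕ → ℝ}
    (hB : ∀ i < N - 1, ∀ y, |deriv (V i) y| ≤ B i ∧ |deriv (deriv (V i)) y| ≤ B i)
    (a : ℕ → ℝ) {i : ℕ} (hi : i < N - 1) :
    |Wcorr N V a i x|
      ≤ (|a (2 * i + 1)| * (2 * B i) + |a (2 * i + 2)| * (4 * B i ^ 2)) * Ham N V x ^ (2 * N - 1) := by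
  have hN : 1 < N := by omega
  have hH := hV.one_le_Ham x hN
  obtain ⟨hd₁, hd₂⟩ := hB i hi (qc x i - qc x (i + 1))
  have hxi : |xi N V i x| ≤ B i := by rwa [xi, abs_neg]
  have hB₀ : 0 ≤ B i := (abs_nonneg _).trans hxi
  have hp (j : ℕ) := hV.abs_pc_le x hN j
  have hLF : |LFxi N V i x| ≤ 4 * B i * Ham N V x := by
    rw [LFxi, abs_neg, abs_mul]
    calc |pc x i - pc x (i + 1)| * |deriv (deriv (V i)) (qc x i - qc x (i + 1))|
        ≤ (2 * Ham N V x + 2 * Ham N V x) * B i := by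
          gcongr
          exact (abs_sub _ _).trans (add_le_add (hp i) (hp (i + 1)))
      _ = 4 * B i * Ham N V x := by ring
  have h₁ : |pc x i * xi N V i x| ≤ 2 * B i * Ham N V x := by
    rw [abs_mul]
    nlinarith [mul_le_mul (hp i) hxi (abs_nonneg _) (by linarith)]
  have h₂ : |xi N V i x * LFxi N V i x| ≤ 4 * B i ^ 2 * Ham N V x := by
    rw [abs_mul]
    nlinarith [mul_le_mul hxi hLF (abs_nonneg _) hB₀]
  calc |Wcorr N V a i x| ≤ _ := abs_add_le _ _
    _ ≤ |a (2 * i + 1)| * (2 * B i) * Ham N V x ^ (2 * N - 1)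
        + |a (2 * i + 2)| * (4 * B i ^ 2) * Ham N V x ^ (2 * N - 1) :=
      add_le_add (abs_mul_pow_mul_le hH (by omega) h₁) (abs_mul_pow_mul_le hH (by omega) h₂)
    _ = _ := by ring

end RotAssumptions

theorem stmt1_general (N : ℕ) (V : ℕ → ℝ → ℝ) (hV : RotAssumptions N V)
    (a : ℕ → ℝ) :
    ∃ c₀ > (0 : ℝ), ∀ a₀ : ℝ, c₀ ≤ a₀ → ∀ x : RotState N,
      a₀ / 2 * Ham N V x ^ (2 * N - 1) ≤ Wrot N V (Function.update a 0 a₀) x ∧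
      Wrot N V (Function.update a 0 a₀) x ≤ 2 * a₀ * Ham N V x ^ (2 * N - 1) := by
  obtain ⟨B, hB⟩ := hV.exists_deriv_bound
  set C := ∑ i ∈ range (N - 1), (|a (2 * i + 1)| * (2 * B i) + |a (2 * i + 2)| * (4 * B i ^ 2))
  refine ⟨max (2 * C) 1, by positivity, fun a₀ ha₀ x => ?_⟩
  have hcorr : |∑ i ∈ range (N - 1), Wcorr N V a i x| ≤ C * Ham N V x ^ (2 * N - 1) := by
    rw [sum_mul]
    exact (abs_sum_le_sum_abs _ _).trans
      (sum_le_sum fun i hi => hV.abs_Wcorr_le x hB a (mem_range.mp hi))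
  rw [Wrot_eq, Function.update_self]
  simp only [Wcorr_update_zero]
  exact half_mul_le_sub_and_sub_le_two_mul (pow_nonneg (hV.Ham_nonneg x) _) hcorr
    ((le_max_left _ _).trans ha₀)

theorem stmt1 (N : ℕ) (hN : 2 ≤ N) (V : ℕ → ℝ → ℝ) (hV : RotAssumptions N V)
    (a : ℕ → ℝ) (ha : ∀ k, 1 ≤ a k) :
    ∃ c₀ > (0 : ℝ), ∀ a₀ : ℝ, c₀ ≤ a₀ → ∀ x : RotState N,
      a₀ / 2 * Ham N V x ^ (2 * N - 1) ≤ Wrot N V (Function.update a 0 a₀) x ∧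
      Wrot N V (Function.update a 0 a₀) x ≤ 2 * a₀ * Ham N V x ^ (2 * N - 1) :=
  stmt1_general N V hV a

end
end

section
/- Let F : ℝ^d → ℝ^d be continuous and let W : ℝ^d → ℝ be a C¹-smooth proper function (all sublevel sets {x : W(x) ≤ c} are compact). Let Q ∈ ℝ be such that the set K = {x : W(x) ≤ Q} is nonempty and ∇W(x)·F(x) < 0 for every x with W(x) > Q. Then for every differentiable curve x : [0,∞) → ℝ^d satisfying x'(t) = F(x(t)) for all t ≥ 0, the distance dist(x(t), K) tends to 0 as t → ∞. -/
/-!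
Along the trajectory, `g t = W (x t)` has derivative `∇W(x t) · F(x t)`, which is negative
whenever `g t > Q`. Hence every level `c > Q` is a barrier: once `g t ≤ c`, this persists. It
is also reached: as long as `g > c`, the trajectory stays in the compact shell
`{c ≤ W ≤ W (x 0)}`, where the Lie derivative is bounded by some `-δ < 0`, so `g` would decrease
linearly forever. Finally, compactness of the sublevel sets makes `{W ≤ Q + ε}` lie in any given
neighbourhood `{infDist · K < r}` of `K` once `ε` is small.
-/

open Set Metric Filter Topology

section RealFunction

variable {g g' : ℝ → ℝ} {a c : ℝ}

theorem le_of_le_of_deriv_neg_at_level (hg : ∀ t, a ≤ t → HasDerivAt g (g' t) t)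
    (hlevel : ∀ t, a ≤ t → g t = c → g' t < 0) (ha : g a ≤ c) :
    ∀ t, a ≤ t → g t ≤ c := fun _ ht =>
  image_le_of_deriv_right_lt_deriv_boundary' (B := fun _ => c) (B' := 0)
    (fun s hs => (hg s hs.1).continuousAt.continuousWithinAt)
    (fun s hs => (hg s hs.1).hasDerivWithinAt) ha continuousOn_const
    (fun _ _ => hasDerivWithinAt_const _ _ _) (fun s hs => hlevel s hs.1)
    ⟨ht, le_rfl⟩

theorem exists_le_of_deriv_le_neg {δ : ℝ} (hδ : 0 < δ)
    (hg : ∀ t, a ≤ t → HasDerivAt g (g' t) t) (hdesc : ∀ t, a ≤ t → c < g t → g' t ≤ -δ) :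
    ∃ t, a ≤ t ∧ g t ≤ c := by
  by_contra! habove
  set T := a + (g a - c) / δ
  have hT : a ≤ T := le_add_of_nonneg_right (div_nonneg (sub_nonneg.2 (habove a le_rfl).le) hδ.le)
  have hlinear : g T ≤ g a - δ * (T - a) :=
    image_le_of_deriv_right_le_deriv_boundary (B := fun t => g a - δ * (t - a)) (B' := fun _ => -δ)
      (fun s hs => (hg s hs.1).continuousAt.continuousWithinAt)
      (fun s hs => (hg s hs.1).hasDerivWithinAt) (by simp) (by fun_prop)
      (fun s _ => by
        simpa using ((((hasDerivAt_id s).sub_const a).const_mul δ).const_sub (g a)).hasDerivWithinAt)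
      (fun s hs => hdesc s hs.1 (habove s hs.1)) ⟨hT, le_rfl⟩
  have hdrop : δ * (T - a) = g a - c := by
    simp only [T, add_sub_cancel_left]
    field_simp
  linarith [habove T hT]

end RealFunction

theorem exists_sublevel_infDist_lt {E : Type*} [PseudoMetricSpace E] {W : E → ℝ}
    (hW : Continuous W) {Q c : ℝ} (hQc : Q < c) (hc : IsCompact {y | W y ≤ c}) {r : ℝ}
    (hr : 0 < r) : ∃ ε > 0, ∀ y, W y ≤ Q + ε → infDist y {y | W y ≤ Q} < r := by
  set A := {y | W y ≤ c} ∩ {y | r ≤ infDist y {y | W y ≤ Q}}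
  have hA : IsCompact A :=
    hc.inter_right (isClosed_le continuous_const (continuous_infDist_pt _))
  obtain ⟨b, hQb, hb⟩ := hA.exists_forall_le' hW.continuousOn (a := Q) fun y hy =>
    lt_of_not_ge fun hyQ => (hr.trans_le hy.2).ne' (infDist_zero_of_mem hyQ)
  refine ⟨(min c b - Q) / 2, by linarith [lt_min hQc hQb], fun y hy => ?_⟩
  have hyc : W y ≤ c := by linarith [min_le_left c b]
  by_contra! hry
  linarith [hb y ⟨hyc, hry⟩, min_le_right c b]

theorem tendsto_infDist_sublevel_of_eventually_le {α E : Type*} [PseudoMetricSpace E]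
    {W : E → ℝ} (hW : Continuous W) {Q : ℝ} (hproper : ∀ c, IsCompact {y | W y ≤ c})
    {l : Filter α} {f : α → E} (hf : ∀ c, Q < c → ∀ᶠ t in l, W (f t) ≤ c) :
    Tendsto (fun t => infDist (f t) {y | W y ≤ Q}) l (𝓝 0) := by
  refine tendsto_order.2 ⟨fun r hr => Eventually.of_forall fun _ => hr.trans_le infDist_nonneg,
    fun r hr => ?_⟩
  obtain ⟨ε, hε, hsub⟩ := exists_sublevel_infDist_lt hW (lt_add_one Q) (hproper _) hr
  filter_upwards [hf (Q + ε) (lt_add_of_pos_right Q hε)] with t ht using hsub _ ht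

section Lyapunov

variable {E : Type*} [NormedAddCommGroup E] [NormedSpace ℝ E] {F : E → E} {W : E → ℝ}
  {x : ℝ → E} {Q : ℝ}

theorem exists_neg_bound_lieDeriv (hF : Continuous F) (hW : ContDiff ℝ 1 W) {A : Set E}
    (hA : IsCompact A) (hneg : ∀ y ∈ A, fderiv ℝ W y (F y) < 0) :
    ∃ δ > 0, ∀ y ∈ A, fderiv ℝ W y (F y) ≤ -δ := by
  have hcont : Continuous fun y => -fderiv ℝ W y (F y) :=
    ((hW.continuous_fderiv one_ne_zero).clm_apply hF).neg
  obtain ⟨δ, hδ, hbound⟩ := hA.exists_forall_le' hcont.continuousOn (a := 0)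
    fun y hy => neg_pos.2 (hneg y hy)
  exact ⟨δ, hδ, fun y hy => le_neg.2 (hbound y hy)⟩

variable (hW : ContDiff ℝ 1 W) (hstrict : ∀ y, Q < W y → fderiv ℝ W y (F y) < 0)
  (hx : ∀ t, 0 ≤ t → HasDerivAt x (F (x t)) t)
include hW hx

theorem hasDerivAt_comp_trajectory {t : ℝ} (ht : 0 ≤ t) :
    HasDerivAt (fun s => W (x s)) (fderiv ℝ W (x t) (F (x t))) t :=
  (hW.differentiable one_ne_zero (x t)).hasFDerivAt.comp_hasDerivAt t (hx t ht)

include hstrict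

theorem le_of_le_of_lyapunov {c : ℝ} (hQc : Q < c) {t₀ : ℝ} (ht₀ : 0 ≤ t₀)
    (hle : W (x t₀) ≤ c) : ∀ t, t₀ ≤ t → W (x t) ≤ c :=
  le_of_le_of_deriv_neg_at_level
    (fun _ ht => hasDerivAt_comp_trajectory hW hx (ht₀.trans ht))
    (fun _ _ hc => hstrict _ (hc ▸ hQc)) hle

theorem exists_lyapunov_le (hF : Continuous F) (hproper : ∀ c, IsCompact {y | W y ≤ c})
    {c : ℝ} (hQc : Q < c) : ∃ t, 0 ≤ t ∧ W (x t) ≤ c := by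
  by_cases h₀ : W (x 0) ≤ c
  · exact ⟨0, le_rfl, h₀⟩
  have hbound : ∀ t, 0 ≤ t → W (x t) ≤ W (x 0) :=
    le_of_le_of_lyapunov hW hstrict hx (hQc.trans (not_le.1 h₀)) le_rfl le_rfl
  have hshell : IsCompact {y | W y ≤ W (x 0) ∧ c ≤ W y} :=
    (hproper _).of_isClosed_subset (isClosed_le hW.continuous continuous_const |>.inter
      (isClosed_le continuous_const hW.continuous)) fun _ hy => hy.1
  obtain ⟨δ, hδ, hdesc⟩ := exists_neg_bound_lieDeriv hF hW hshell
    fun y hy => hstrict y (hQc.trans_le hy.2)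
  exact exists_le_of_deriv_le_neg hδ (fun t ht => hasDerivAt_comp_trajectory hW hx ht)
    fun t ht hct => hdesc _ ⟨hbound t ht, hct.le⟩

theorem eventually_lyapunov_le (hF : Continuous F) (hproper : ∀ c, IsCompact {y | W y ≤ c})
    {c : ℝ} (hQc : Q < c) : ∀ᶠ t in atTop, W (x t) ≤ c := by
  obtain ⟨t₀, ht₀, hle⟩ := exists_lyapunov_le hW hstrict hx hF hproper hQc
  exact eventually_atTop.2 ⟨t₀, le_of_le_of_lyapunov hW hstrict hx hQc ht₀ hle⟩

end Lyapunov

theorem stmt8_general (d : ℕ) (F : EuclideanSpace ℝ (Fin d) → EuclideanSpace ℝ (Fin d))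
    (hF : Continuous F) (W : EuclideanSpace ℝ (Fin d) → ℝ) (hW : ContDiff ℝ 1 W)
    (hproper : ∀ c : ℝ, IsCompact {x | W x ≤ c}) (Q : ℝ)
    (hstrict : ∀ x, Q < W x → fderiv ℝ W x (F x) < 0)
    (x : ℝ → EuclideanSpace ℝ (Fin d))
    (hx : ∀ t : ℝ, 0 ≤ t → HasDerivAt x (F (x t)) t) :
    Filter.Tendsto (fun t => Metric.infDist (x t) {y | W y ≤ Q})
      Filter.atTop (nhds 0) :=
  tendsto_infDist_sublevel_of_eventually_le hW.continuous hproper fun _ hc =>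
    eventually_lyapunov_le hW hstrict hx hF hproper hc

theorem stmt8 (d : ℕ) (F : EuclideanSpace ℝ (Fin d) → EuclideanSpace ℝ (Fin d))
    (hF : Continuous F) (W : EuclideanSpace ℝ (Fin d) → ℝ) (hW : ContDiff ℝ 1 W)
    (hproper : ∀ c : ℝ, IsCompact {x | W x ≤ c}) (Q : ℝ)
    (hne : Set.Nonempty {x | W x ≤ Q})
    (hstrict : ∀ x, Q < W x → fderiv ℝ W x (F x) < 0)
    (x : ℝ → EuclideanSpace ℝ (Fin d))
    (hx : ∀ t : ℝ, 0 ≤ t → HasDerivAt x (F (x t)) t) :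
    Filter.Tendsto (fun t => Metric.infDist (x t) {y | W y ≤ Q})
      Filter.atTop (nhds 0) :=
  stmt8_general d F hF W hW hproper Q hstrict x hx
end

section
/- Let F : ℝ^d → ℝ^d be a C^m-smooth vector field (m ≥ 1), let x̂ be an equilibrium point (F(x̂) = 0), and let W : ℝ^d → ℝ be a C^r-smooth function with 1 ≤ r ≤ m+1 which is proper, positive on ℝ^d \ {x̂}, vanishes at x̂, and satisfies L_F W(x) ≤ 0 for all x. Let P ⊂ ℝ^d be a closed bounded neighbourhood of x̂ which is positively invariant: every differentiable curve x : [0,∞) → ℝ^d with x'(t) = F(x(t)) and x(0) ∈ P satisfies x(t) ∈ P for all t ≥ 0. Assume that for every x ∈ P \ {x̂} the vector (L_F W(x), L_F² W(x), …, L_F^r W(x)) is nonzero. Then x̂ is asymptotically stable and P is contained in its basin of attraction; that is: (i) for every ε > 0 there exists δ > 0 such that every solution curve x : [0,∞) → ℝ^d with x'(t) = F(x(t)) and |x(0) − x̂| < δ satisfies |x(t) − x̂| < ε for all t ≥ 0, and (ii) every solution curve x : [0,∞) → ℝ^d with x'(t) = F(x(t)) and x(0) ∈ P satisfies x(t) →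 x̂ as t → ∞. -/
/-!
Stability: the sublevel sets `{W ≤ c}`, `c > 0`, are compact and shrink to `xhat`, so one of them
lies in a given ball; it contains a smaller ball around `xhat`, and no trajectory starting there
can leave it because `W` does not increase along trajectories.

Attraction: along a trajectory in the compact set `P`, `W` decreases to a limit. The trajectory is
Lipschitz (`F` is bounded on `P`), so each `L_F^k W ∘ x` is uniformly continuous, and Barbalat's
lemma, applied successively for `k = 1, …, r`, gives `L_F^k W (x t) → 0`. Hence every cluster point
of the trajectory is a point of `P` where all these Lie derivatives vanish, i.e. `xhat`.
-/

open Finset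

noncomputable section

/-- Iterated Lie derivative `L_F^k g` of `g` along the vector field `F`. -/
def iterLie {E : Type*} [NormedAddCommGroup E] [NormedSpace ℝ E]
    (F : E → E) : ℕ → (E → ℝ) → E → ℝ
  | 0 => fun g => g
  | k + 1 => fun g x => fderiv ℝ (iterLie F k g) x (F x)

open Set Filter Topology

section LyapunovSublevel

variable {X : Type*} [TopologicalSpace X] {W : X → ℝ} {xhat : X}

theorem exists_sublevel_subset_of_mem_nhds (hW : Continuous W)
    (hproper : ∀ c : ℝ, IsCompact {x | W x ≤ c}) (hpos : ∀ x, x ≠ xhat → 0 < W x)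
    {U : Set X} (hU : U ∈ 𝓝 xhat) : ∃ c > 0, {x | W x ≤ c} ⊆ U := by
  let V : ℕ → Set X := fun n => {x | W x ≤ 1 / (n + 1)}
  have hV : Antitone V := fun i j hij x (hx : W x ≤ _) =>
    hx.trans (one_div_le_one_div_of_le (by positivity) (by exact_mod_cast Nat.succ_le_succ hij))
  obtain ⟨n, hn⟩ := exists_subset_nhds_of_isCompact' hV.directed_ge (fun n => hproper _)
    (fun n => isClosed_le hW continuous_const) (U := U) fun x hx => by
      have hWx : W x ≤ 0 :=
        ge_of_tendsto' tendsto_one_div_add_atTop_nhds_zero_nat (mem_iInter.mp hx)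
      by_cases h : x = xhat
      · exact h ▸ hU
      · exact absurd hWx (hpos x h).not_ge
  exact ⟨1 / (n + 1), by positivity, hn⟩

end LyapunovSublevel

theorem tendsto_zero_of_hasDerivAt_of_uniformContinuousOn {φ ψ : ℝ → ℝ} {c : ℝ}
    (hφ : ∀ t, 0 ≤ t → HasDerivAt φ (ψ t) t) (hlim : Tendsto φ atTop (𝓝 c))
    (hψ : UniformContinuousOn ψ (Ici 0)) : Tendsto ψ atTop (𝓝 0) := by
  rw [Metric.tendsto_nhds]
  intro ε hε
  obtain ⟨δ, hδ, hψδ⟩ := Metric.uniformContinuousOn_iff.mp hψ (ε / 2) (by positivity)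
  have hincr : Tendsto (fun t => φ (t + δ) - φ t) atTop (𝓝 0) := by
    simpa using (hlim.comp (tendsto_atTop_add_const_right _ δ tendsto_id)).sub hlim
  filter_upwards [Metric.tendsto_nhds.mp hincr (ε / 2 * δ) (by positivity),
    eventually_ge_atTop 0] with t hsmall ht
  -- the increment of `φ` over `[t, t + δ]` is `δ` times a value of `ψ` that is close to `ψ t`
  obtain ⟨ξ, hξ, hslope⟩ := exists_hasDerivAt_eq_slope φ ψ (lt_add_of_pos_right t hδ)
    (fun s hs => (hφ s (ht.trans hs.1)).continuousAt.continuousWithinAt)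
    fun s hs => hφ s (ht.trans hs.1.le)
  have hψξ : |ψ ξ| < ε / 2 := by
    rw [hslope, add_sub_cancel_left, abs_div, abs_of_pos hδ, div_lt_iff₀ hδ]
    simpa using hsmall
  have hclose : |ψ t - ψ ξ| < ε / 2 := by
    refine hψδ t ht ξ (ht.trans hξ.1.le) ?_
    rw [Real.dist_eq, abs_sub_comm, abs_of_pos (sub_pos.mpr hξ.1)]
    linarith [hξ.2]
  rw [Real.dist_eq, sub_zero]
  linarith [abs_sub_abs_le_abs_sub (ψ t) (ψ ξ)]

theorem AntitoneOn.exists_tendsto_atTop {f : ℝ → ℝ} {a : ℝ} (hf : AntitoneOn f (Ici a))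
    (hbdd : BddBelow (f '' Ici a)) : ∃ L, Tendsto f atTop (𝓝 L) := by
  have hanti : Antitone fun t => f (max t a) := fun s t hst =>
    hf (le_max_right s a) (le_max_right t a) (max_le_max hst le_rfl)
  have hbdd' : BddBelow (range fun t => f (max t a)) :=
    hbdd.mono (range_subset_iff.mpr fun t => mem_image_of_mem f (le_max_right t a))
  refine ⟨_, (tendsto_atTop_ciInf hanti hbdd').congr' ?_⟩
  filter_upwards [eventually_ge_atTop a] with t ht
  rw [max_eq_left ht]

section Trajectory

variable {E : Type*} [NormedAddCommGroup E] [NormedSpace ℝ E] {F : E → E} {W : E → ℝ}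
  {x : ℝ → E} {m r : ℕ}

def IsForwardTrajectory (F : E → E) (x : ℝ → E) : Prop :=
  ∀ t : ℝ, 0 ≤ t → HasDerivAt x (F (x t)) t

theorem contDiff_fderiv_apply {n : ℕ} {g : E → ℝ} (hF : ContDiff ℝ n F)
    (hg : ContDiff ℝ (n + 1 : ℕ) g) : ContDiff ℝ n (fun y => fderiv ℝ g y (F y)) :=
  (hg.fderiv_right (by push_cast; rfl)).clm_apply hF

theorem contDiff_iterLie (hF : ContDiff ℝ m F) (hW : ContDiff ℝ r W)
    (hrm : r ≤ m + 1) {k : ℕ} (hk : k ≤ r) : ContDiff ℝ (r - k : ℕ) (iterLie F k W) := by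
  induction k with
  | zero => exact hW
  | succ k ih =>
    have h := ih (by omega)
    rw [show r - k = r - (k + 1) + 1 by omega] at h
    exact contDiff_fderiv_apply (hF.of_le (by exact_mod_cast (by omega : r - (k + 1) ≤ m))) h

theorem IsForwardTrajectory.hasDerivAt_comp (hx : IsForwardTrajectory F x) {g : E → ℝ} {t : ℝ}
    (ht : 0 ≤ t) (hg : DifferentiableAt ℝ g (x t)) :
    HasDerivAt (g ∘ x) (fderiv ℝ g (x t) (F (x t))) t :=
  hg.hasFDerivAt.comp_hasDerivAt t (hx t ht)

theorem IsForwardTrajectory.antitoneOn_comp (hx : IsForwardTrajectory F x) {g : E → ℝ}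
    (hg : Differentiable ℝ g) (hdecr : ∀ y, fderiv ℝ g y (F y) ≤ 0) :
    AntitoneOn (g ∘ x) (Ici 0) := by
  have hder : ∀ t ∈ Ici (0 : ℝ), HasDerivAt (g ∘ x) _ t :=
    fun t ht => hx.hasDerivAt_comp ht (hg _)
  refine antitoneOn_of_deriv_nonpos (convex_Ici 0)
    (fun t ht => (hder t ht).continuousAt.continuousWithinAt)
    (fun t ht => (hder t (interior_subset ht)).differentiableAt.differentiableWithinAt)
    fun t ht => ?_
  rw [(hder t (interior_subset ht)).deriv]
  exact hdecr _

theorem IsForwardTrajectory.exists_lipschitzOnWith (hx : IsForwardTrajectory F x) {K : Set E}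
    (hK : IsCompact K) (hF : ContinuousOn F K) (hxK : ∀ t, 0 ≤ t → x t ∈ K) :
    ∃ C, LipschitzOnWith C x (Ici 0) := by
  obtain ⟨C, hC⟩ := hK.exists_bound_of_continuousOn hF
  refine ⟨C.toNNReal, (convex_Ici 0).lipschitzOnWith_of_nnnorm_hasDerivWithin_le
    (fun t ht => (hx t ht).hasDerivWithinAt) fun t ht => ?_⟩
  rw [← NNReal.coe_le_coe, coe_nnnorm]
  exact (hC _ (hxK t ht)).trans (le_max_left _ _)

theorem IsForwardTrajectory.uniformContinuousOn_comp {β : Type*} [UniformSpace β]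
    (hx : IsForwardTrajectory F x) {K : Set E} (hK : IsCompact K) (hF : ContinuousOn F K)
    (hxK : ∀ t, 0 ≤ t → x t ∈ K) {g : E → β} (hg : ContinuousOn g K) :
    UniformContinuousOn (g ∘ x) (Ici 0) := by
  obtain ⟨C, hC⟩ := hx.exists_lipschitzOnWith hK hF hxK
  exact (hK.uniformContinuousOn_of_continuous hg).comp hC.uniformContinuousOn hxK

theorem IsForwardTrajectory.tendsto_iterLie_comp (hx : IsForwardTrajectory F x) {K : Set E}
    (hK : IsCompact K) (hxK : ∀ t, 0 ≤ t → x t ∈ K) (hF : ContDiff ℝ m F)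
    (hW : ContDiff ℝ r W) (hrm : r ≤ m + 1) {L : ℝ} (hL : Tendsto (W ∘ x) atTop (𝓝 L)) :
    ∀ k ∈ Finset.Icc 1 r, Tendsto (iterLie F k W ∘ x) atTop (𝓝 0) := by
  have step : ∀ k, k + 1 ≤ r → (∃ c, Tendsto (iterLie F k W ∘ x) atTop (𝓝 c)) →
      Tendsto (iterLie F (k + 1) W ∘ x) atTop (𝓝 0) := by
    rintro k hk ⟨c, hc⟩
    have hdiff : Differentiable ℝ (iterLie F k W) :=
      (contDiff_iterLie hF hW hrm (k := k) (by omega)).differentiable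
        (by exact_mod_cast (by omega : r - k ≠ 0))
    exact tendsto_zero_of_hasDerivAt_of_uniformContinuousOn
      (fun t ht => hx.hasDerivAt_comp ht (hdiff _)) hc
      (hx.uniformContinuousOn_comp hK hF.continuous.continuousOn hxK
        (contDiff_iterLie hF hW hrm hk).continuous.continuousOn)
  intro k hk
  obtain ⟨hk1, hkr⟩ := Finset.mem_Icc.mp hk
  obtain ⟨j, rfl⟩ : ∃ j, k = j + 1 := ⟨k - 1, by omega⟩
  clear hk hk1
  induction j with
  | zero => exact step 0 hkr ⟨L, hL⟩
  | succ j ih => exact step (j + 1) hkr ⟨0, ih (by omega)⟩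

theorem IsForwardTrajectory.tendsto_of_iterLie_ne_zero (hx : IsForwardTrajectory F x)
    {K : Set E} (hK : IsCompact K) (hxK : ∀ t, 0 ≤ t → x t ∈ K) (hF : ContDiff ℝ m F)
    (hW : ContDiff ℝ r W) (hrm : r ≤ m + 1) (hr1 : 1 ≤ r) (hdecr : ∀ y, iterLie F 1 W y ≤ 0)
    {xhat : E} (hnonzero : ∀ y ∈ K \ {xhat}, ∃ k ∈ Finset.Icc 1 r, iterLie F k W y ≠ 0) :
    Tendsto x atTop (𝓝 xhat) := by
  have hWd : Differentiable ℝ W := hW.differentiable (by exact_mod_cast (by omega : r ≠ 0))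
  have hbdd : BddBelow ((W ∘ x) '' Ici 0) :=
    (hK.bddBelow_image hW.continuous.continuousOn).mono
      (by rintro _ ⟨t, ht, rfl⟩; exact mem_image_of_mem W (hxK t ht))
  obtain ⟨L, hL⟩ := (hx.antitoneOn_comp hWd hdecr).exists_tendsto_atTop hbdd
  have hlie := hx.tendsto_iterLie_comp hK hxK hF hW hrm hL
  refine hK.tendsto_nhds_of_unique_mapClusterPt (eventually_atTop.mpr ⟨0, hxK⟩)
    fun y hyK hy => ?_
  by_contra hne
  obtain ⟨k, hk, hky⟩ := hnonzero y ⟨hyK, hne⟩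
  have hcont : Continuous (iterLie F k W) :=
    (contDiff_iterLie hF hW hrm (Finset.mem_Icc.mp hk).2).continuous
  exact hky <| eq_of_nhds_neBot <|
    (hy.continuousAt_comp hcont.continuousAt).clusterPt.mono (hlie k hk)

theorem lyapunov_stable (hW : Differentiable ℝ W) (hproper : ∀ c : ℝ, IsCompact {x | W x ≤ c})
    {xhat : E} (hpos : ∀ x, x ≠ xhat → 0 < W x) (hxhat : W xhat = 0)
    (hdecr : ∀ y, fderiv ℝ W y (F y) ≤ 0) :
    ∀ ε > (0 : ℝ), ∃ δ > (0 : ℝ), ∀ x : ℝ → E, IsForwardTrajectory F x →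
      dist (x 0) xhat < δ → ∀ t : ℝ, 0 ≤ t → dist (x t) xhat < ε := by
  intro ε hε
  obtain ⟨c, hc, hsub⟩ :=
    exists_sublevel_subset_of_mem_nhds hW.continuous hproper hpos (Metric.ball_mem_nhds xhat hε)
  obtain ⟨δ, hδ, hWδ⟩ := Metric.eventually_nhds_iff.mp
    (hW.continuous.continuousAt.eventually (gt_mem_nhds (hxhat ▸ hc)))
  refine ⟨δ, hδ, fun x hx hx0 t ht => hsub ?_⟩
  exact ((hx.antitoneOn_comp hW hdecr) self_mem_Ici ht ht).trans (hWδ hx0).le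

end Trajectory

theorem stmt11_general (d m r : ℕ) (hr1 : 1 ≤ r) (hrm : r ≤ m + 1)
    (F : EuclideanSpace ℝ (Fin d) → EuclideanSpace ℝ (Fin d)) (hF : ContDiff ℝ m F)
    (xhat : EuclideanSpace ℝ (Fin d))
    (W : EuclideanSpace ℝ (Fin d) → ℝ) (hW : ContDiff ℝ r W)
    (hproper : ∀ c : ℝ, IsCompact {x | W x ≤ c})
    (hWpos : ∀ x, x ≠ xhat → 0 < W x) (hWhat : W xhat = 0)
    (hnonstrict : ∀ x, iterLie F 1 W x ≤ 0)
    (P : Set (EuclideanSpace ℝ (Fin d)))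
    (hPclosed : IsClosed P) (hPbounded : Bornology.IsBounded P)
    (hPinv : ∀ x : ℝ → EuclideanSpace ℝ (Fin d),
      (∀ t : ℝ, 0 ≤ t → HasDerivAt x (F (x t)) t) → x 0 ∈ P → ∀ t : ℝ, 0 ≤ t → x t ∈ P)
    (hnonzero : ∀ y ∈ P \ {xhat}, ∃ k ∈ Finset.Icc 1 r, iterLie F k W y ≠ 0) :
    (∀ ε > (0 : ℝ), ∃ δ > (0 : ℝ),
      ∀ x : ℝ → EuclideanSpace ℝ (Fin d),
        (∀ t : ℝ, 0 ≤ t → HasDerivAt x (F (x t)) t) → dist (x 0) xhat < δ →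
          ∀ t : ℝ, 0 ≤ t → dist (x t) xhat < ε) ∧
    (∀ x : ℝ → EuclideanSpace ℝ (Fin d),
      (∀ t : ℝ, 0 ≤ t → HasDerivAt x (F (x t)) t) → x 0 ∈ P →
        Filter.Tendsto x Filter.atTop (nhds xhat)) := by
  have hWd : Differentiable ℝ W := hW.differentiable (by exact_mod_cast (by omega : r ≠ 0))
  refine ⟨lyapunov_stable hWd hproper hWpos hWhat hnonstrict, fun x hx hx0 => ?_⟩
  exact IsForwardTrajectory.tendsto_of_iterLie_ne_zero hx
    (Metric.isCompact_of_isClosed_isBounded hPclosed hPbounded) (hPinv x hx hx0)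
    hF hW hrm hr1 hnonstrict hnonzero

theorem stmt11 (d m r : ℕ) (hm : 1 ≤ m) (hr1 : 1 ≤ r) (hrm : r ≤ m + 1)
    (F : EuclideanSpace ℝ (Fin d) → EuclideanSpace ℝ (Fin d)) (hF : ContDiff ℝ m F)
    (xhat : EuclideanSpace ℝ (Fin d)) (heq : F xhat = 0)
    (W : EuclideanSpace ℝ (Fin d) → ℝ) (hW : ContDiff ℝ r W)
    (hproper : ∀ c : ℝ, IsCompact {x | W x ≤ c})
    (hWpos : ∀ x, x ≠ xhat → 0 < W x) (hWhat : W xhat = 0)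
    (hnonstrict : ∀ x, iterLie F 1 W x ≤ 0)
    (P : Set (EuclideanSpace ℝ (Fin d)))
    (hPclosed : IsClosed P) (hPbounded : Bornology.IsBounded P) (hPnbhd : P ∈ nhds xhat)
    (hPinv : ∀ x : ℝ → EuclideanSpace ℝ (Fin d),
      (∀ t : ℝ, 0 ≤ t → HasDerivAt x (F (x t)) t) → x 0 ∈ P → ∀ t : ℝ, 0 ≤ t → x t ∈ P)
    (hnonzero : ∀ y ∈ P \ {xhat}, ∃ k ∈ Finset.Icc 1 r, iterLie F k W y ≠ 0) :
    (∀ ε > (0 : ℝ), ∃ δ > (0 : ℝ),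
      ∀ x : ℝ → EuclideanSpace ℝ (Fin d),
        (∀ t : ℝ, 0 ≤ t → HasDerivAt x (F (x t)) t) → dist (x 0) xhat < δ →
          ∀ t : ℝ, 0 ≤ t → dist (x t) xhat < ε) ∧
    (∀ x : ℝ → EuclideanSpace ℝ (Fin d),
      (∀ t : ℝ, 0 ≤ t → HasDerivAt x (F (x t)) t) → x 0 ∈ P →
        Filter.Tendsto x Filter.atTop (nhds xhat)) :=
  stmt11_general d m r hr1 hrm F hF xhat W hW hproper hWpos hWhat hnonstrict P hPclosed hPbounded
    hPinv hnonzero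
end
end

section
/- Let F : ℝ^d → ℝ^d be a smooth vector field and let H, g : ℝ^d → ℝ be smooth functions such that L_F H = −g² identically on ℝ^d. Then for every m ∈ ℕ and every x ∈ ℝ^d the following equivalence holds: L_F^k H(x) = 0 for all 1 ≤ k ≤ 2m+1 if and only if L_F^k g(x) = 0 for all 0 ≤ k ≤ m. -/
open Finset

noncomputable section

lemma contDiff_iterLie_s12 {E : Type*} [NormedAddCommGroup E] [NormedSpace ℝ E]
    {F : E → E} (hF : ContDiff ℝ (⊤ : ℕ∞) F) {g : E → ℝ} (hg : ContDiff ℝ (⊤ : ℕ∞) g) :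
    ∀ k, ContDiff ℝ (⊤ : ℕ∞) (iterLie F k g)
  | 0 => hg
  | (k+1) => ((contDiff_iterLie_s12 hF hg k).fderiv_right (by simp)).clm_apply hF

lemma pascal_sum (k : ℕ) (c : ℕ → ℝ) :
    ∑ j ∈ range (k+1), (k.choose j : ℝ) * c (j+1)
      + ∑ j ∈ range (k+1), (k.choose j : ℝ) * c j
    = ∑ j ∈ range (k+2), ((k+1).choose j : ℝ) * c j := by
  rw [Finset.sum_range_succ' (fun j => ((k+1).choose j : ℝ) * c j) (k+1)]
  have h2 : ∑ j ∈ range (k+1), (((k+1).choose (j+1) : ℕ) : ℝ) * c (j+1)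
      = ∑ j ∈ range (k+1), ((k.choose j : ℝ) * c (j+1) + (k.choose (j+1) : ℝ) * c (j+1)) :=
    Finset.sum_congr rfl fun j _ => by rw [Nat.choose_succ_succ]; push_cast; ring
  rw [h2, Finset.sum_add_distrib]
  have h3 : ∑ j ∈ range (k+1), (k.choose (j+1) : ℝ) * c (j+1) + ((k.choose 0 : ℕ) : ℝ) * c 0
      = ∑ j ∈ range (k+2), (k.choose j : ℝ) * c j :=
    (Finset.sum_range_succ' (fun j => (k.choose j : ℝ) * c j) (k+1)).symm
  have h4 : ∑ j ∈ range (k+2), (k.choose j : ℝ) * c j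
      = ∑ j ∈ range (k+1), (k.choose j : ℝ) * c j := by
    rw [Finset.sum_range_succ]; simp
  rw [h4] at h3
  simp only [Nat.choose_zero_right, Nat.cast_one, one_mul] at h3 ⊢
  linarith

lemma key {E : Type*} [NormedAddCommGroup E] [NormedSpace ℝ E]
    {F : E → E} (hF : ContDiff ℝ (⊤ : ℕ∞) F) {H g : E → ℝ} (hg : ContDiff ℝ (⊤ : ℕ∞) g)
    (hLH : ∀ x, iterLie F 1 H x = -(g x) ^ 2) :
    ∀ k x, iterLie F (k+1) H x
      = -∑ j ∈ range (k+1), (k.choose j : ℝ) * (iterLie F j g x * iterLie F (k-j) g x) := by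
  intro k
  induction k with
  | zero =>
    intro x
    rw [hLH x]
    simp [iterLie]
    ring
  | succ k ih =>
    intro x
    have hfun : iterLie F (k+1) H
        = fun y => -∑ j ∈ range (k+1), (k.choose j : ℝ) * (iterLie F j g y * iterLie F (k-j) g y) :=
      funext ih
    have hd : ∀ (j : ℕ) (y : E), HasFDerivAt (iterLie F j g) (fderiv ℝ (iterLie F j g) y) y :=
      fun j y => (((contDiff_iterLie_s12 hF hg j).differentiable (by simp)) y).hasFDerivAt
    have hS : HasFDerivAt
        (fun y => -∑ j ∈ range (k+1), (k.choose j : ℝ) * (iterLie F j g y * iterLie F (k-j) g y))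
        (-∑ j ∈ range (k+1), (k.choose j : ℝ) •
            (iterLie F j g x • fderiv ℝ (iterLie F (k-j) g) x
              + iterLie F (k-j) g x • fderiv ℝ (iterLie F j g) x)) x :=
      (HasFDerivAt.fun_sum fun j _ => ((hd j x).mul (hd (k-j) x)).const_mul _).fun_neg
    have heq : iterLie F (k+2) H x
        = (-∑ j ∈ range (k+1), (k.choose j : ℝ) •
            (iterLie F j g x • fderiv ℝ (iterLie F (k-j) g) x
              + iterLie F (k-j) g x • fderiv ℝ (iterLie F j g) x)) (F x) := by
      show fderiv ℝ (iterLie F (k+1) H) x (F x) = _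
      rw [hfun, hS.fderiv]
    rw [heq]
    have hrfl : ∀ j, fderiv ℝ (iterLie F j g) x (F x) = iterLie F (j+1) g x := fun j => rfl
    simp only [ContinuousLinearMap.neg_apply, ContinuousLinearMap.sum_apply,
      ContinuousLinearMap.smul_apply, ContinuousLinearMap.add_apply, smul_eq_mul, hrfl]
    rw [neg_inj]
    have hc : ∀ j ∈ range (k+1),
        (k.choose j : ℝ) * (iterLie F j g x * iterLie F (k-j+1) g x
            + iterLie F (k-j) g x * iterLie F (j+1) g x)
        = (k.choose j : ℝ) * ((iterLie F j g x * iterLie F (k+1-j) g x)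
            + (iterLie F (j+1) g x * iterLie F (k+1-(j+1)) g x)) := by
      intro j hj
      have hjk : j ≤ k := by simpa [Nat.lt_succ_iff] using mem_range.mp hj
      rw [show k - j + 1 = k + 1 - j from by omega, show k + 1 - (j+1) = k - j from by omega]
      ring
    rw [Finset.sum_congr rfl hc]
    simp only [mul_add, Finset.sum_add_distrib]
    rw [add_comm]
    exact pascal_sum k (fun j => iterLie F j g x * iterLie F (k+1-j) g x)

theorem stmt12 (d : ℕ)
    (F : EuclideanSpace ℝ (Fin d) → EuclideanSpace ℝ (Fin d)) (hF : ContDiff ℝ (⊤ : ℕ∞) F)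
    (H g : EuclideanSpace ℝ (Fin d) → ℝ) (hH : ContDiff ℝ (⊤ : ℕ∞) H) (hg : ContDiff ℝ (⊤ : ℕ∞) g)
    (hLH : ∀ x, iterLie F 1 H x = -(g x) ^ 2)
    (m : ℕ) (x : EuclideanSpace ℝ (Fin d)) :
    (∀ k, 1 ≤ k → k ≤ 2 * m + 1 → iterLie F k H x = 0) ↔
      (∀ k ≤ m, iterLie F k g x = 0) := by
  constructor
  · intro h k
    induction k using Nat.strong_induction_on with
    | _ k ih =>
      intro hk
      have h2k := h (2*k+1) (by omega) (by omega)
      rw [key hF hg hLH (2*k) x] at h2k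
      have hsum : ∑ j ∈ range (2*k+1),
            ((2*k).choose j : ℝ) * (iterLie F j g x * iterLie F (2*k-j) g x)
          = ((2*k).choose k : ℝ) * (iterLie F k g x * iterLie F k g x) := by
        rw [Finset.sum_eq_single k]
        · rw [show 2*k - k = k from by omega]
        · intro j hj hjk
          have hj' : j < 2*k + 1 := mem_range.mp hj
          rcases lt_or_gt_of_ne hjk with h' | h'
          · rw [ih j h' (by omega)]; ring
          · rw [ih (2*k - j) (by omega) (by omega)]; ring
        · intro hk'; exact absurd (mem_range.mpr (by omega)) hk'
      rw [hsum] at h2k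
      have hC : ((2*k).choose k : ℝ) ≠ 0 := by
        exact_mod_cast (Nat.choose_pos (by omega)).ne'
      have := neg_eq_zero.mp h2k
      have hmul : iterLie F k g x * iterLie F k g x = 0 :=
        (mul_eq_zero.mp this).resolve_left hC
      exact mul_self_eq_zero.mp hmul
  · intro h k hk1 hk2
    obtain ⟨n, rfl⟩ : ∃ n, k = n + 1 := ⟨k - 1, by omega⟩
    rw [key hF hg hLH n x]
    rw [neg_eq_zero]
    apply Finset.sum_eq_zero
    intro j hj
    have hj' : j < n + 1 := mem_range.mp hj
    by_cases hjm : j ≤ m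
    · rw [h j hjm]; ring
    · rw [h (n - j) (by omega)]; ring
end
end
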